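/- Combined bound at fixed points: if β^λ_{ijkl}(λ, y) = 0 for all i, j, k, l and β^y_i(y) = 0 for all i, then S + (1/2) b₂ + b̃₀ − 6 Y ≤ (1/4) Ns ε². -/
import Mathlib


open Matrix

noncomputable section

/-- Entrywise complex conjugate of a matrix. -/
def mconj {Nf : ℕ} (A : Matrix (Fin Nf) (Fin Nf) ℂ) : Matrix (Fin Nf) (Fin Nf) ℂ :=
  A.map (starRingEnd ℂ)

/-- `Z_{ij} = Tr(y_i ȳ_j + ȳ_i y_j)` (a real number). -/
def Zw {Ns Nf : ℕ} (y : Fin Ns → Matrix (Fin Nf) (Fin Nf) ℂ) (i j : Fin Ns) : ℝ :=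
  (Matrix.trace (y i * mconj (y j) + mconj (y i) * y j)).re

/-- `X_{ijkl} = (1/4) Σ_σ Tr(y_{σ(i)} ȳ_{σ(j)} y_{σ(k)} ȳ_{σ(l)})`,
summing over all 24 permutations of the index list `(i,j,k,l)`. -/
def Xw {Ns Nf : ℕ} (y : Fin Ns → Matrix (Fin Nf) (Fin Nf) ℂ) (i j k l : Fin Ns) : ℝ :=
  (1 / 4) * (∑ σ : Equiv.Perm (Fin 4),
    Matrix.trace (y (![i, j, k, l] (σ 0)) * mconj (y (![i, j, k, l] (σ 1))) *
      (y (![i, j, k, l] (σ 2)) * mconj (y (![i, j, k, l] (σ 3)))))).re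

/-- Full permutation symmetry of the quartic coupling tensor. -/
def FullySymm {Ns : ℕ} (lam : Fin Ns → Fin Ns → Fin Ns → Fin Ns → ℝ) : Prop :=
  ∀ i j k l, lam i j k l = lam j i k l ∧ lam i j k l = lam i k j l ∧
    lam i j k l = lam i j l k

/-- One-loop quartic beta function for Weyl fermions (α = 2). -/
def betaLamW {Ns Nf : ℕ} (ε : ℝ) (lam : Fin Ns → Fin Ns → Fin Ns → Fin Ns → ℝ)
    (y : Fin Ns → Matrix (Fin Nf) (Fin Nf) ℂ) (i j k l : Fin Ns) : ℝ :=
  -ε * lam i j k l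
    + ∑ m, ∑ n, (lam i j m n * lam m n k l + lam i k m n * lam m n j l
        + lam i l m n * lam m n j k)
    - 4 * Xw y i j k l
    + (1 / 2) * ∑ m, (Zw y i m * lam m j k l + Zw y j m * lam i m k l
        + Zw y k m * lam i j m l + Zw y l m * lam i j k m)

/-- One-loop Yukawa beta function for Weyl fermions (α = 2). -/
def betaYW {Ns Nf : ℕ} (ε : ℝ) (y : Fin Ns → Matrix (Fin Nf) (Fin Nf) ℂ) (i : Fin Ns) :
    Matrix (Fin Nf) (Fin Nf) ℂ :=
  (-(1 / 2) * (ε : ℂ)) • y i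
    + (1 / 2 : ℂ) • ∑ j, (y j * mconj (y j) * y i + y i * mconj (y j) * y j
        + (4 : ℂ) • (y j * mconj (y i) * y j))
    + (1 / 2 : ℂ) • ∑ j, ((Zw y i j : ℂ) • y j)

/-- `a₀ = λ_{iijj}`. -/
def a0inv {Ns : ℕ} (lam : Fin Ns → Fin Ns → Fin Ns → Fin Ns → ℝ) : ℝ :=
  ∑ i, ∑ j, lam i i j j

/-- `a₁ = λ_{iimn} λ_{jjmn}`. -/
def a1inv {Ns : ℕ} (lam : Fin Ns → Fin Ns → Fin Ns → Fin Ns → ℝ) : ℝ :=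
  ∑ m, ∑ n, (∑ i, lam i i m n) * (∑ j, lam j j m n)

/-- `S = λ_{ijkl} λ_{ijkl} = ‖λ‖²`. -/
def Sinv {Ns : ℕ} (lam : Fin Ns → Fin Ns → Fin Ns → Fin Ns → ℝ) : ℝ :=
  ∑ i, ∑ j, ∑ k, ∑ l, lam i j k l ^ 2

/-- `b₀ = Z_{ii}`. -/
def b0inv {Ns Nf : ℕ} (y : Fin Ns → Matrix (Fin Nf) (Fin Nf) ℂ) : ℝ :=
  ∑ i, Zw y i i

/-- `b₁ = Z_{ij} Z_{ij} − b₀²/Ns`. -/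
def b1inv {Ns Nf : ℕ} (y : Fin Ns → Matrix (Fin Nf) (Fin Nf) ℂ) : ℝ :=
  (∑ i, ∑ j, Zw y i j ^ 2) - b0inv y ^ 2 / (Ns : ℝ)

/-- `b₂ = Σ_{i,j} (λ_{ijkk} − (a₀/Ns) δ_{ij} + Z_{ij} − (b₀/Ns) δ_{ij})²`. -/
def b2inv {Ns Nf : ℕ} (lam : Fin Ns → Fin Ns → Fin Ns → Fin Ns → ℝ)
    (y : Fin Ns → Matrix (Fin Nf) (Fin Nf) ℂ) : ℝ :=
  ∑ i, ∑ j, ((∑ k, lam i j k k) - (a0inv lam / (Ns : ℝ)) * (if i = j then 1 else 0)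
      + Zw y i j - (b0inv y / (Ns : ℝ)) * (if i = j then 1 else 0)) ^ 2

/-- `b₃ = X_{iijj}`. -/
def b3inv {Ns Nf : ℕ} (y : Fin Ns → Matrix (Fin Nf) (Fin Nf) ℂ) : ℝ :=
  ∑ i, ∑ j, Xw y i i j j

/-- `Y = Tr(y_i ȳ_i y_j ȳ_j) = ‖y_i ȳ_i‖²`. -/
def Yinv {Ns Nf : ℕ} (y : Fin Ns → Matrix (Fin Nf) (Fin Nf) ℂ) : ℝ :=
  (∑ i, ∑ j, Matrix.trace (y i * mconj (y i) * (y j * mconj (y j)))).re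

/-- `b̃₀ = a₀ b₀ / Ns`. -/
def btilde0 {Ns Nf : ℕ} (lam : Fin Ns → Fin Ns → Fin Ns → Fin Ns → ℝ)
    (y : Fin Ns → Matrix (Fin Nf) (Fin Nf) ℂ) : ℝ :=
  a0inv lam * b0inv y / (Ns : ℝ)

/-- The `A`-function `A_y(λ)` generating the one-loop quartic beta function. -/
def Afun {Ns Nf : ℕ} (ε : ℝ) (lam : Fin Ns → Fin Ns → Fin Ns → Fin Ns → ℝ)
    (y : Fin Ns → Matrix (Fin Nf) (Fin Nf) ℂ) : ℝ :=
  -(1 / 2) * ε * (∑ i, ∑ j, ∑ k, ∑ l, lam i j k l * lam i j k l)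
    + (∑ i, ∑ j, ∑ k, ∑ l, ∑ m, ∑ n, lam i j k l * lam k l m n * lam m n i j)
    - 4 * (∑ i, ∑ j, ∑ k, ∑ l, Xw y i j k l * lam i j k l)
    + (∑ i, ∑ j, ∑ k, ∑ l, ∑ m, Zw y i j * lam i k l m * lam j k l m)

def permList : List (Equiv.Perm (Fin 4)) := [(Equiv.mk ![0, 1, 2, 3] ![0, 1, 2, 3] (by decide) (by decide) : Equiv.Perm (Fin 4)),
  (Equiv.mk ![0, 1, 3, 2] ![0, 1, 3, 2] (by decide) (by decide) : Equiv.Perm (Fin 4)),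
  (Equiv.mk ![0, 2, 1, 3] ![0, 2, 1, 3] (by decide) (by decide) : Equiv.Perm (Fin 4)),
  (Equiv.mk ![0, 2, 3, 1] ![0, 3, 1, 2] (by decide) (by decide) : Equiv.Perm (Fin 4)),
  (Equiv.mk ![0, 3, 1, 2] ![0, 2, 3, 1] (by decide) (by decide) : Equiv.Perm (Fin 4)),
  (Equiv.mk ![0, 3, 2, 1] ![0, 3, 2, 1] (by decide) (by decide) : Equiv.Perm (Fin 4)),
  (Equiv.mk ![1, 0, 2, 3] ![1, 0, 2, 3] (by decide) (by decide) : Equiv.Perm (Fin 4)),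
  (Equiv.mk ![1, 0, 3, 2] ![1, 0, 3, 2] (by decide) (by decide) : Equiv.Perm (Fin 4)),
  (Equiv.mk ![1, 2, 0, 3] ![2, 0, 1, 3] (by decide) (by decide) : Equiv.Perm (Fin 4)),
  (Equiv.mk ![1, 2, 3, 0] ![3, 0, 1, 2] (by decide) (by decide) : Equiv.Perm (Fin 4)),
  (Equiv.mk ![1, 3, 0, 2] ![2, 0, 3, 1] (by decide) (by decide) : Equiv.Perm (Fin 4)),
  (Equiv.mk ![1, 3, 2, 0] ![3, 0, 2, 1] (by decide) (by decide) : Equiv.Perm (Fin 4)),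
  (Equiv.mk ![2, 0, 1, 3] ![1, 2, 0, 3] (by decide) (by decide) : Equiv.Perm (Fin 4)),
  (Equiv.mk ![2, 0, 3, 1] ![1, 3, 0, 2] (by decide) (by decide) : Equiv.Perm (Fin 4)),
  (Equiv.mk ![2, 1, 0, 3] ![2, 1, 0, 3] (by decide) (by decide) : Equiv.Perm (Fin 4)),
  (Equiv.mk ![2, 1, 3, 0] ![3, 1, 0, 2] (by decide) (by decide) : Equiv.Perm (Fin 4)),
  (Equiv.mk ![2, 3, 0, 1] ![2, 3, 0, 1] (by decide) (by decide) : Equiv.Perm (Fin 4)),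
  (Equiv.mk ![2, 3, 1, 0] ![3, 2, 0, 1] (by decide) (by decide) : Equiv.Perm (Fin 4)),
  (Equiv.mk ![3, 0, 1, 2] ![1, 2, 3, 0] (by decide) (by decide) : Equiv.Perm (Fin 4)),
  (Equiv.mk ![3, 0, 2, 1] ![1, 3, 2, 0] (by decide) (by decide) : Equiv.Perm (Fin 4)),
  (Equiv.mk ![3, 1, 0, 2] ![2, 1, 3, 0] (by decide) (by decide) : Equiv.Perm (Fin 4)),
  (Equiv.mk ![3, 1, 2, 0] ![3, 1, 2, 0] (by decide) (by decide) : Equiv.Perm (Fin 4)),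
  (Equiv.mk ![3, 2, 0, 1] ![2, 3, 1, 0] (by decide) (by decide) : Equiv.Perm (Fin 4)),
  (Equiv.mk ![3, 2, 1, 0] ![3, 2, 1, 0] (by decide) (by decide) : Equiv.Perm (Fin 4))]

lemma univ_eq : (Finset.univ : Finset (Equiv.Perm (Fin 4))) = permList.toFinset := by decide

lemma sum_perm_four (F : Fin 4 → Fin 4 → Fin 4 → Fin 4 → ℂ) :
    ∑ σ : Equiv.Perm (Fin 4), F (σ 0) (σ 1) (σ 2) (σ 3) = F 0 1 2 3 + F 0 1 3 2 + F 0 2 1 3 + F 0 2 3 1 + F 0 3 1 2 + F 0 3 2 1 + F 1 0 2 3 + F 1 0 3 2 + F 1 2 0 3 + F 1 2 3 0 + F 1 3 0 2 + F 1 3 2 0 + F 2 0 1 3 + F 2 0 3 1 + F 2 1 0 3 + F 2 1 3 0 + F 2 3 0 1 + F 2 3 1 0 + F 3 0 1 2 + F 3 0 2 1 + F 3 1 0 2 + F 3 1 2 0 + F 3 2 0 1 + F 3 2 1 0 := by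
  rw [univ_eq, List.sum_toFinset _ (by decide)]
  simp only [permList, List.map, List.sum_cons, List.sum_nil, Equiv.coe_fn_mk,
    Matrix.cons_val_zero, Matrix.cons_val_one, Matrix.head_cons,
    Matrix.cons_val_two, Matrix.tail_cons, Matrix.cons_val_three]
  ring

variable {Ns Nf : ℕ}

/-- `tQ y a b c d = Tr(y_a ȳ_b y_c ȳ_d)`. -/
def tQ (y : Fin Ns → Matrix (Fin Nf) (Fin Nf) ℂ) (a b c d : Fin Ns) : ℂ :=
  Matrix.trace (y a * mconj (y b) * (y c * mconj (y d)))

lemma mconj_mul (A B : Matrix (Fin Nf) (Fin Nf) ℂ) : mconj (A * B) = mconj A * mconj B :=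
  Matrix.map_mul

lemma trace_mconj (A : Matrix (Fin Nf) (Fin Nf) ℂ) :
    Matrix.trace (mconj A) = (starRingEnd ℂ) (Matrix.trace A) := by
  simp [mconj, Matrix.trace, Matrix.diag, map_sum]

lemma mconj_mconj (A : Matrix (Fin Nf) (Fin Nf) ℂ) : mconj (mconj A) = A := by
  ext i j
  simp [mconj]

lemma re_tQ_shift (y : Fin Ns → Matrix (Fin Nf) (Fin Nf) ℂ) (a b c d : Fin Ns) :
    (tQ y a b c d).re = (tQ y b c d a).re := by
  have h1 : (starRingEnd ℂ) (tQ y a b c d) = Matrix.trace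
      (mconj (y a) * y b * (mconj (y c) * y d)) := by
    rw [tQ, ← trace_mconj]
    congr 1
    simp [mconj_mul, mconj_mconj, mul_assoc]
  have h2 : Matrix.trace (mconj (y a) * y b * (mconj (y c) * y d)) = tQ y b c d a := by
    rw [show mconj (y a) * y b * (mconj (y c) * y d)
        = mconj (y a) * (y b * (mconj (y c) * y d)) from by simp [mul_assoc],
      Matrix.trace_mul_comm, tQ]
    congr 1
    simp [mul_assoc]
  have := congrArg Complex.re (h1.trans h2)
  simpa using this

set_option maxHeartbeats 1000000 in
lemma X_iijj (y : Fin Ns → Matrix (Fin Nf) (Fin Nf) ℂ) (i j : Fin Ns) :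
    Xw y i i j j = (tQ y i i j j).re + (tQ y i j i j).re + (tQ y i j j i).re
      + (tQ y j i i j).re + (tQ y j i j i).re + (tQ y j j i i).re := by
  have h : (∑ σ : Equiv.Perm (Fin 4),
      Matrix.trace (y (![i, i, j, j] (σ 0)) * mconj (y (![i, i, j, j] (σ 1))) *
        (y (![i, i, j, j] (σ 2)) * mconj (y (![i, i, j, j] (σ 3)))))) =
      4 * (tQ y i i j j + tQ y i j i j + tQ y i j j i
        + tQ y j i i j + tQ y j i j i + tQ y j j i i) := by
    rw [sum_perm_four (fun a b c d => Matrix.trace (y (![i, i, j, j] a) * mconj (y (![i, i, j, j] b)) *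
      (y (![i, i, j, j] c) * mconj (y (![i, i, j, j] d)))))]
    simp only [Matrix.cons_val_zero, Matrix.cons_val_one, Matrix.head_cons,
      Matrix.cons_val_two, Matrix.tail_cons, Matrix.cons_val_three, tQ]
    ring
  rw [Xw, h]
  simp


lemma trace_conj_swap (y : Fin Ns → Matrix (Fin Nf) (Fin Nf) ℂ) (i j : Fin Ns) :
    Matrix.trace (mconj (y i) * y j) = (starRingEnd ℂ) (Matrix.trace (y i * mconj (y j))) := by
  rw [← trace_mconj]
  congr 1
  simp [mconj_mul, mconj_mconj]

lemma Zw_eq (y : Fin Ns → Matrix (Fin Nf) (Fin Nf) ℂ) (i j : Fin Ns) :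
    Zw y i j = 2 * (Matrix.trace (y i * mconj (y j))).re := by
  rw [Zw, Matrix.trace_add, Complex.add_re, trace_conj_swap]
  simp
  ring

lemma Zw_symm (y : Fin Ns → Matrix (Fin Nf) (Fin Nf) ℂ) (i j : Fin Ns) :
    Zw y i j = Zw y j i := by
  rw [Zw_eq, Zw_eq]
  have h1 : Matrix.trace (y j * mconj (y i)) =
      (starRingEnd ℂ) (Matrix.trace (y i * mconj (y j))) := by
    rw [Matrix.trace_mul_comm, trace_conj_swap]
  rw [h1]
  simp


lemma re_trace_yy (y : Fin Ns → Matrix (Fin Nf) (Fin Nf) ℂ) (i j : Fin Ns) :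
    (Matrix.trace (mconj (y i) * y j)).re = Zw y i j / 2 := by
  rw [trace_conj_swap, Complex.conj_re, Zw_eq]
  ring

lemma trace_A (y : Fin Ns → Matrix (Fin Nf) (Fin Nf) ℂ) (i j : Fin Ns) :
    Matrix.trace (mconj (y i) * (y j * mconj (y j) * y i)) = tQ y j j i i := by
  rw [Matrix.trace_mul_comm, tQ]
  congr 1
  simp [mul_assoc]

lemma trace_B (y : Fin Ns → Matrix (Fin Nf) (Fin Nf) ℂ) (i j : Fin Ns) :
    Matrix.trace (mconj (y i) * (y i * mconj (y j) * y j)) = (starRingEnd ℂ) (tQ y i i j j) := by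
  rw [tQ, ← trace_mconj]
  congr 1
  simp [mconj_mul, mconj_mconj, mul_assoc]

lemma trace_C (y : Fin Ns → Matrix (Fin Nf) (Fin Nf) ℂ) (i j : Fin Ns) :
    Matrix.trace (mconj (y i) * (y j * mconj (y i) * y j)) = (starRingEnd ℂ) (tQ y i j i j) := by
  rw [tQ, ← trace_mconj]
  congr 1
  simp [mconj_mul, mconj_mconj, mul_assoc]

lemma yukawa_key (ε : ℝ) (y : Fin Ns → Matrix (Fin Nf) (Fin Nf) ℂ)
    (hfpy : ∀ i, betaYW ε y i = 0) (i : Fin Ns) :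
    ε / 4 * Zw y i i = (1/2) * (∑ j, ((tQ y j j i i).re + (tQ y i i j j).re
      + 4 * (tQ y i j i j).re)) + (1/4) * ∑ j, (Zw y i j)^2 := by
  have h0 : Matrix.trace (mconj (y i) * betaYW ε y i) = 0 := by
    rw [hfpy i, Matrix.mul_zero, Matrix.trace_zero]
  have hexp : Matrix.trace (mconj (y i) * betaYW ε y i)
      = (-(1/2) * (ε:ℂ)) * Matrix.trace (mconj (y i) * y i)
        + (1/2) * ∑ j, (tQ y j j i i + (starRingEnd ℂ) (tQ y i i j j)
            + 4 * (starRingEnd ℂ) (tQ y i j i j))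
        + (1/2) * ∑ j, ((Zw y i j : ℂ) * Matrix.trace (mconj (y i) * y j)) := by
    rw [betaYW]
    rw [Matrix.mul_add, Matrix.mul_add, Matrix.trace_add, Matrix.trace_add]
    congr 1
    · congr 1
      · rw [Matrix.mul_smul, Matrix.trace_smul, smul_eq_mul]
      · rw [Matrix.mul_smul, Matrix.trace_smul, smul_eq_mul, Matrix.mul_sum,
          Matrix.trace_sum]
        congr 1
        apply Finset.sum_congr rfl
        intro j _
        rw [Matrix.mul_add, Matrix.mul_add, Matrix.trace_add, Matrix.trace_add,
          trace_A, trace_B, Matrix.mul_smul, Matrix.trace_smul, smul_eq_mul, trace_C]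
    · rw [Matrix.mul_smul, Matrix.trace_smul, smul_eq_mul, Matrix.mul_sum,
        Matrix.trace_sum]
      congr 1
      apply Finset.sum_congr rfl
      intro j _
      rw [Matrix.mul_smul, Matrix.trace_smul, smul_eq_mul]
  have hc1 : (-(1/2) * (ε:ℂ)) = ((-(ε/2) : ℝ) : ℂ) := by push_cast; ring
  have hc2 : ((1/2 : ℂ)) = (((1/2:ℝ)) : ℂ) := by norm_num
  have hc4 : ((4 : ℂ)) = (((4:ℝ)) : ℂ) := by norm_num
  rw [hexp, hc1, hc2, hc4] at h0
  have h1 := congrArg Complex.re h0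
  simp only [Complex.add_re, Complex.re_ofReal_mul, Complex.re_sum, Complex.zero_re,
    Complex.conj_re, re_trace_yy] at h1
  have h2 : ∀ j, Zw y i j * (Zw y i j / 2) = (Zw y i j)^2 / 2 := fun j => by ring
  simp only [h2] at h1
  rw [← Finset.sum_div] at h1
  linarith [h1]


lemma yukawa_sum (ε : ℝ) (y : Fin Ns → Matrix (Fin Nf) (Fin Nf) ℂ)
    (hfpy : ∀ i, betaYW ε y i = 0) :
    ε * b0inv y = 4 * Yinv y + 8 * (∑ i, ∑ j, (tQ y i j i j).re)
      + ∑ i, ∑ j, (Zw y i j)^2 := by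
  have h : ∑ i, (ε/4 * Zw y i i)
      = ∑ i, ((1/2) * (∑ j, ((tQ y j j i i).re + (tQ y i i j j).re
          + 4 * (tQ y i j i j).re)) + (1/4) * ∑ j, (Zw y i j)^2) :=
    Finset.sum_congr rfl (fun i _ => yukawa_key ε y hfpy i)
  have hsplit : ∀ i : Fin Ns, (1/2) * (∑ j, ((tQ y j j i i).re + (tQ y i i j j).re
          + 4 * (tQ y i j i j).re)) + (1/4) * ∑ j, (Zw y i j)^2
      = (1/2) * (∑ j, (tQ y j j i i).re) + (1/2) * (∑ j, (tQ y i i j j).re)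
        + 2 * (∑ j, (tQ y i j i j).re) + (1/4) * ∑ j, (Zw y i j)^2 := by
    intro i
    rw [Finset.sum_add_distrib, Finset.sum_add_distrib, ← Finset.mul_sum]
    ring
  simp only [hsplit] at h
  rw [Finset.sum_add_distrib, Finset.sum_add_distrib, Finset.sum_add_distrib] at h
  simp only [← Finset.mul_sum] at h
  have c1 : ∑ i, ∑ j, (tQ y j j i i).re = ∑ i, ∑ j, (tQ y i i j j).re :=
    Finset.sum_comm
  have hY : Yinv y = ∑ i, ∑ j, (tQ y i i j j).re := by
    rw [Yinv, Complex.re_sum]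
    exact Finset.sum_congr rfl fun i _ => by rw [Complex.re_sum]; rfl
  have hb : b0inv y = ∑ i, Zw y i i := rfl
  rw [hb, hY]
  linear_combination 4*h + 2*c1

lemma b3_eq (y : Fin Ns → Matrix (Fin Nf) (Fin Nf) ℂ) :
    b3inv y = 4 * Yinv y + 2 * ∑ i, ∑ j, (tQ y i j i j).re := by
  have e : ∀ i j : Fin Ns, Xw y i i j j
      = (tQ y i i j j).re + (tQ y i j i j).re + (tQ y j j i i).re
        + (tQ y i i j j).re + (tQ y j i j i).re + (tQ y j j i i).re := by
    intro i j
    rw [X_iijj, re_tQ_shift y i j j i, re_tQ_shift y j i i j]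
  have hb3 : b3inv y = ∑ i, ∑ j, ((tQ y i i j j).re + (tQ y i j i j).re
      + (tQ y j j i i).re + (tQ y i i j j).re + (tQ y j i j i).re + (tQ y j j i i).re) := by
    rw [b3inv]
    exact Finset.sum_congr rfl fun i _ => Finset.sum_congr rfl fun j _ => e i j
  simp only [Finset.sum_add_distrib] at hb3
  have c1 : ∑ i, ∑ j, (tQ y j j i i).re = ∑ i, ∑ j, (tQ y i i j j).re :=
    Finset.sum_comm
  have c2 : ∑ i, ∑ j, (tQ y j i j i).re = ∑ i, ∑ j, (tQ y i j i j).re :=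
    Finset.sum_comm
  have hY : Yinv y = ∑ i, ∑ j, (tQ y i i j j).re := by
    rw [Yinv, Complex.re_sum]
    exact Finset.sum_congr rfl fun i _ => by rw [Complex.re_sum]; rfl
  rw [hY]
  linarith [hb3, c1, c2]


/-- `LL lam i j = λ_{ijkk}`. -/
def LL {Ns : ℕ} (lam : Fin Ns → Fin Ns → Fin Ns → Fin Ns → ℝ) (i j : Fin Ns) : ℝ :=
  ∑ k, lam i j k k

lemma lam_pair {Ns : ℕ} {lam : Fin Ns → Fin Ns → Fin Ns → Fin Ns → ℝ}
    (hsym : FullySymm lam) (i j k l : Fin Ns) : lam i j k l = lam k l i j := by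
  calc lam i j k l = lam i k j l := (hsym i j k l).2.1
    _ = lam k i j l := (hsym i k j l).1
    _ = lam k i l j := (hsym k i j l).2.2
    _ = lam k l i j := (hsym k i l j).2.1

lemma sum4_reorder {Ns : ℕ} (f : Fin Ns → Fin Ns → Fin Ns → Fin Ns → ℝ) :
    ∑ i, ∑ j, ∑ m, ∑ n, f i j m n = ∑ m, ∑ n, ∑ i, ∑ j, f i j m n := by
  calc ∑ i, ∑ j, ∑ m, ∑ n, f i j m n
      = ∑ i, ∑ m, ∑ n, ∑ j, f i j m n := Finset.sum_congr rfl fun i _ => by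
        rw [Finset.sum_comm]
        exact Finset.sum_congr rfl fun m _ => Finset.sum_comm
    _ = ∑ m, ∑ i, ∑ n, ∑ j, f i j m n := Finset.sum_comm
    _ = ∑ m, ∑ n, ∑ i, ∑ j, f i j m n := Finset.sum_congr rfl fun m _ => Finset.sum_comm

lemma hP1 {Ns Nf : ℕ} {lam : Fin Ns → Fin Ns → Fin Ns → Fin Ns → ℝ}
    (y : Fin Ns → Matrix (Fin Nf) (Fin Nf) ℂ) (hsym : FullySymm lam) :
    ∑ i, ∑ j, ∑ m, ∑ n, lam i i m n * lam m n j j = a1inv lam := by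
  have e1 : ∀ i j m n : Fin Ns, lam i i m n * lam m n j j = lam i i m n * lam j j m n :=
    fun i j m n => by rw [lam_pair hsym m n j j]
  simp only [e1]
  rw [sum4_reorder fun i j m n => lam i i m n * lam j j m n, a1inv]
  exact Finset.sum_congr rfl fun m _ => Finset.sum_congr rfl fun n _ =>
    (Finset.sum_mul_sum _ _ _ _).symm

lemma hP2 {Ns : ℕ} {lam : Fin Ns → Fin Ns → Fin Ns → Fin Ns → ℝ} (hsym : FullySymm lam) :
    ∑ i, ∑ j, ∑ m, ∑ n, lam i j m n * lam m n i j = Sinv lam := by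
  rw [Sinv]
  exact Finset.sum_congr rfl fun i _ => Finset.sum_congr rfl fun j _ =>
    Finset.sum_congr rfl fun m _ => Finset.sum_congr rfl fun n _ => by
      rw [lam_pair hsym m n i j]; ring

lemma quartic_sum {Ns Nf : ℕ} (ε : ℝ) (lam : Fin Ns → Fin Ns → Fin Ns → Fin Ns → ℝ)
    (y : Fin Ns → Matrix (Fin Nf) (Fin Nf) ℂ) (hsym : FullySymm lam)
    (hfpl : ∀ i j k l, betaLamW ε lam y i j k l = 0) :
    ε * a0inv lam = a1inv lam + 2 * Sinv lam - 4 * b3inv y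
      + 2 * ∑ i, ∑ j, Zw y i j * LL lam i j := by
  have h : ∑ i, ∑ j, betaLamW ε lam y i i j j = 0 := by simp [hfpl]
  have expand : ∀ i j : Fin Ns, betaLamW ε lam y i i j j
      = -ε * lam i i j j
        + ((∑ m, ∑ n, lam i i m n * lam m n j j) + 2 * ∑ m, ∑ n, lam i j m n * lam m n i j)
        - 4 * Xw y i i j j
        + (1/2) * ((∑ m, Zw y i m * lam m i j j) + (∑ m, Zw y i m * lam i m j j)
            + (∑ m, Zw y j m * lam i i m j) + (∑ m, Zw y j m * lam i i j m)) := by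
    intro i j
    rw [betaLamW]
    simp only [Finset.sum_add_distrib]
    ring
  simp only [expand] at h
  simp only [Finset.sum_add_distrib, Finset.sum_sub_distrib, ← Finset.mul_sum] at h
  rw [hP1 y hsym, hP2 hsym] at h
  -- Q terms
  have hQ1 : ∑ i, ∑ j, ∑ m, Zw y i m * lam m i j j
      = ∑ i, ∑ j, Zw y i j * LL lam i j := by
    apply Finset.sum_congr rfl; intro i _
    rw [Finset.sum_comm]
    apply Finset.sum_congr rfl; intro m _
    rw [← Finset.mul_sum, LL]
    congr 1
    exact Finset.sum_congr rfl fun j _ => (hsym m i j j).1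
  have hQ2 : ∑ i, ∑ j, ∑ m, Zw y i m * lam i m j j
      = ∑ i, ∑ j, Zw y i j * LL lam i j := by
    apply Finset.sum_congr rfl; intro i _
    rw [Finset.sum_comm]
    exact Finset.sum_congr rfl fun m _ => by rw [← Finset.mul_sum, LL]
  have hQ3 : ∑ i, ∑ j, ∑ m, Zw y j m * lam i i m j
      = ∑ i, ∑ j, Zw y i j * LL lam i j := by
    calc ∑ i, ∑ j, ∑ m, Zw y j m * lam i i m j
        = ∑ j, ∑ m, Zw y j m * ∑ i, lam i i m j := by
          rw [Finset.sum_comm]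
          apply Finset.sum_congr rfl; intro j _
          rw [Finset.sum_comm]
          exact Finset.sum_congr rfl fun m _ => by rw [← Finset.mul_sum]
      _ = ∑ i, ∑ j, Zw y i j * LL lam j i := by
          apply Finset.sum_congr rfl; intro j _
          apply Finset.sum_congr rfl; intro m _
          rw [LL]
          congr 1
          exact Finset.sum_congr rfl fun i _ => lam_pair hsym i i m j
      _ = ∑ i, ∑ j, Zw y i j * LL lam i j := by
          apply Finset.sum_congr rfl; intro i _
          apply Finset.sum_congr rfl; intro j _
          congr 1
          exact Finset.sum_congr rfl fun k _ => (hsym j i k k).1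
  have hQ4 : ∑ i, ∑ j, ∑ m, Zw y j m * lam i i j m
      = ∑ i, ∑ j, Zw y i j * LL lam i j := by
    calc ∑ i, ∑ j, ∑ m, Zw y j m * lam i i j m
        = ∑ j, ∑ m, Zw y j m * ∑ i, lam i i j m := by
          rw [Finset.sum_comm]
          apply Finset.sum_congr rfl; intro j _
          rw [Finset.sum_comm]
          exact Finset.sum_congr rfl fun m _ => by rw [← Finset.mul_sum]
      _ = ∑ i, ∑ j, Zw y i j * LL lam i j := by
          apply Finset.sum_congr rfl; intro j _
          apply Finset.sum_congr rfl; intro m _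
          rw [LL]
          congr 1
          exact Finset.sum_congr rfl fun i _ => lam_pair hsym i i j m
  rw [hQ1, hQ2, hQ3, hQ4] at h
  have ha0 : ∑ i, ∑ j, lam i i j j = a0inv lam := rfl
  have hb3 : ∑ i, ∑ j, Xw y i i j j = b3inv y := rfl
  rw [ha0, hb3] at h
  linarith [h]


lemma a1_eq_LL {Ns : ℕ} {lam : Fin Ns → Fin Ns → Fin Ns → Fin Ns → ℝ}
    (hsym : FullySymm lam) : a1inv lam = ∑ i, ∑ j, (LL lam i j)^2 := by
  rw [a1inv]
  apply Finset.sum_congr rfl; intro m _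
  apply Finset.sum_congr rfl; intro n _
  have e : ∑ i, lam i i m n = LL lam m n := by
    rw [LL]
    exact Finset.sum_congr rfl fun i _ => lam_pair hsym i i m n
  rw [e]
  ring

lemma b2_eq {Ns Nf : ℕ} (hNs : 1 ≤ Ns) (lam : Fin Ns → Fin Ns → Fin Ns → Fin Ns → ℝ)
    (y : Fin Ns → Matrix (Fin Nf) (Fin Nf) ℂ) (hsym : FullySymm lam) :
    b2inv lam y = a1inv lam + 2 * (∑ i, ∑ j, Zw y i j * LL lam i j)
      + (∑ i, ∑ j, (Zw y i j)^2) - (a0inv lam + b0inv y)^2 / (Ns : ℝ) := by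
  have hN : (0:ℝ) < (Ns:ℝ) := by exact_mod_cast hNs
  have e1 : ∀ i j : Fin Ns, ((∑ k, lam i j k k) - (a0inv lam / (Ns:ℝ)) * (if i = j then 1 else 0)
      + Zw y i j - (b0inv y / (Ns:ℝ)) * (if i = j then 1 else 0)) ^ 2
      = ((LL lam i j)^2 + 2 * (Zw y i j * LL lam i j) + (Zw y i j)^2)
        - 2 * ((a0inv lam + b0inv y) / (Ns:ℝ))
            * (if i = j then LL lam i j + Zw y i j else 0)
        + ((a0inv lam + b0inv y) / (Ns:ℝ))^2 * (if i = j then 1 else 0) := by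
    intro i j
    simp only [LL]
    by_cases h : i = j
    · simp only [if_pos h]
      field_simp
      ring
    · simp only [if_neg h]
      ring
  rw [b2inv]
  simp only [e1]
  simp only [Finset.sum_add_distrib, Finset.sum_sub_distrib, ← Finset.mul_sum]
  have e2 : ∀ i : Fin Ns, ∑ j, (if i = j then LL lam i j + Zw y i j else 0)
      = LL lam i i + Zw y i i := by
    intro i
    rw [Finset.sum_ite_eq]
    simp
  have e3 : ∀ i : Fin Ns, ∑ j, (if i = j then (1:ℝ) else 0) = 1 := by
    intro i
    rw [Finset.sum_ite_eq]
    simp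
  simp only [e2, e3]
  have e4 : ∑ i : Fin Ns, (LL lam i i + Zw y i i) = a0inv lam + b0inv y := by
    rw [Finset.sum_add_distrib]
    rfl
  have e5 : ∑ i : Fin Ns, (1:ℝ) = (Ns:ℝ) := by simp
  rw [e4, e5, a1_eq_LL hsym]
  field_simp
  ring

/-- Combined bound at fixed points: `S + (1/2) b₂ + b̃₀ − 6 Y ≤ (1/4) Ns ε²`. -/
theorem combined_bound {Ns Nf : ℕ} (hNs : 1 ≤ Ns) (hNf : 1 ≤ Nf)
    (ε : ℝ) (lam : Fin Ns → Fin Ns → Fin Ns → Fin Ns → ℝ)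
    (y : Fin Ns → Matrix (Fin Nf) (Fin Nf) ℂ)
    (hsym : FullySymm lam) (hy : ∀ i, (y i)ᵀ = y i)
    (hfpl : ∀ i j k l, betaLamW ε lam y i j k l = 0)
    (hfpy : ∀ i, betaYW ε y i = 0) :
    Sinv lam + (1 / 2) * b2inv lam y + btilde0 lam y - 6 * Yinv y
      ≤ (1 / 4) * (Ns : ℝ) * ε ^ 2 := by
  have hN : (0:ℝ) < (Ns:ℝ) := by exact_mod_cast hNs
  set Y3 : ℝ := ∑ i, ∑ j, (tQ y i j i j).re with hY3
  have ha : ε * a0inv lam = a1inv lam + 2 * Sinv lam - 4 * b3inv y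
      + 2 * ∑ i, ∑ j, Zw y i j * LL lam i j := quartic_sum ε lam y hsym hfpl
  have hy2 : ε * b0inv y = 4 * Yinv y + 8 * Y3 + ∑ i, ∑ j, (Zw y i j)^2 :=
    yukawa_sum ε y hfpy
  have hb3 : b3inv y = 4 * Yinv y + 2 * Y3 := b3_eq y
  have hb2 : b2inv lam y = a1inv lam + 2 * (∑ i, ∑ j, Zw y i j * LL lam i j)
      + (∑ i, ∑ j, (Zw y i j)^2) - (a0inv lam + b0inv y)^2 / (Ns : ℝ) :=
    b2_eq hNs lam y hsym
  have hbt : btilde0 lam y = a0inv lam * b0inv y / (Ns:ℝ) := rfl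
  have key : Sinv lam + (1 / 2) * b2inv lam y + btilde0 lam y - 6 * Yinv y
      = ε * a0inv lam / 2 + ε * b0inv y / 2
        - (a0inv lam ^ 2 + b0inv y ^ 2) / (2 * (Ns:ℝ)) := by
    rw [hbt]
    linear_combination (-(1:ℝ)/2) * ha + 2 * hb3 + (-(1:ℝ)/2) * hy2 + (1/2) * hb2
  rw [key]
  have hfin : (1 / 4) * (Ns : ℝ) * ε ^ 2
      - (ε * a0inv lam / 2 + ε * b0inv y / 2
        - (a0inv lam ^ 2 + b0inv y ^ 2) / (2 * (Ns:ℝ)))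
      = (((Ns:ℝ) * ε - 2 * a0inv lam)^2 + ((Ns:ℝ) * ε - 2 * b0inv y)^2) / (8 * (Ns:ℝ)) := by
    field_simp
    ring
  have hpos : 0 ≤ (((Ns:ℝ) * ε - 2 * a0inv lam)^2 + ((Ns:ℝ) * ε - 2 * b0inv y)^2)
      / (8 * (Ns:ℝ)) := by positivity
  linarith
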